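/- arXiv:2202.01315 — 2 statements merged into one kernel-verified Lean document; each statement's English description precedes it below -/
import Mathlib

section
/- Let E be a real normed vector space and let f : E → ℝ be K-Lipschitz (with respect to the norm on E and the absolute value on ℝ). Let θ_full, θ_Z, θ_loo, I_ẑ, I_zi be elements of E, let N be a positive real number and C, C', M ≥ 0 real constants such that ‖θ_full − I_zi − θ_loo‖ ≤ C·M²/N and ‖θ_full − I_ẑ − θ_Z‖ ≤ C'·M²/N. Suppose further that a real number ℓ̃ satisfies |ℓ̃ − f(θ_loo)| ≤ |f(θ_Z + I_ẑ − I_zi) − f(θ_loo)|. Then |ℓ̃ − f(θ_loo)| ≤ K·(C + C')·M²/N. -/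
theorem norm_add_sub_sub_le_of_common_point {E : Type*} [SeminormedAddCommGroup E]
    (x a b u v : E) : ‖a + u - v - b‖ ≤ ‖x - v - b‖ + ‖x - u - a‖ :=
  calc ‖a + u - v - b‖ = ‖(x - v - b) - (x - u - a)‖ := by congr 1; abel
    _ ≤ ‖x - v - b‖ + ‖x - u - a‖ := norm_sub_le _ _

theorem acp_consistency_direct_general {E : Type*} [NormedAddCommGroup E]
    (K : NNReal) (f : E → ℝ) (hf : LipschitzWith K f)
    (θfull θZ θloo Iz Izi : E) (N C C' M : ℝ)
    (h1 : ‖θfull - Izi - θloo‖ ≤ C * M ^ 2 / N)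
    (h2 : ‖θfull - Iz - θZ‖ ≤ C' * M ^ 2 / N)
    (ℓt : ℝ)
    (h3 : |ℓt - f θloo| ≤ |f (θZ + Iz - Izi) - f θloo|) :
    |ℓt - f θloo| ≤ (K : ℝ) * (C + C') * M ^ 2 / N := by
  have hpoint : dist (θZ + Iz - Izi) θloo ≤ (C + C') * M ^ 2 / N :=
    calc dist (θZ + Iz - Izi) θloo
        ≤ ‖θfull - Izi - θloo‖ + ‖θfull - Iz - θZ‖ := by
          rw [dist_eq_norm]; exact norm_add_sub_sub_le_of_common_point θfull _ _ _ _
      _ ≤ C * M ^ 2 / N + C' * M ^ 2 / N := add_le_add h1 h2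
      _ = (C + C') * M ^ 2 / N := by ring
  calc |ℓt - f θloo| ≤ |f (θZ + Iz - Izi) - f θloo| := h3
    _ ≤ K * ((C + C') * M ^ 2 / N) := by
      rw [← Real.dist_eq]; exact hf.dist_le_mul_of_le hpoint
    _ = K * (C + C') * M ^ 2 / N := by ring

/-- Consistency of approximate full conformal prediction (direct approach):
if the approximate score `ℓt` is at least as accurate as the indirect
influence-function approximation, and the leave-one-out parameter estimation
errors satisfy the Giordano-style bounds, then the score approximation error
is at most `K·(C + C')·M²/N`. -/
theorem acp_consistency_direct {E : Type*} [NormedAddCommGroup E] [NormedSpace ℝ E]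
    (K : NNReal) (f : E → ℝ) (hf : LipschitzWith K f)
    (θfull θZ θloo Iz Izi : E) (N C C' M : ℝ)
    (hN : 0 < N) (hC : 0 ≤ C) (hC' : 0 ≤ C') (hM : 0 ≤ M)
    (h1 : ‖θfull - Izi - θloo‖ ≤ C * M ^ 2 / N)
    (h2 : ‖θfull - Iz - θZ‖ ≤ C' * M ^ 2 / N)
    (ℓt : ℝ)
    (h3 : |ℓt - f θloo| ≤ |f (θZ + Iz - Izi) - f θloo|) :
    |ℓt - f θloo| ≤ (K : ℝ) * (C + C') * M ^ 2 / N :=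
  acp_consistency_direct_general K f hf θfull θZ θloo Iz Izi N C C' M h1 h2 ℓt h3
end

section
/- Let N be a natural number, δ ≥ 0 a real number, and α, α̃ : Fin (N+1) → ℝ two families of nonconformity scores with distinguished test index j = N (the last index). Suppose |α̃(i) − α(i)| ≤ δ for every i ∈ Fin (N+1). Then the conformal p-values p = |{i : α(i) ≥ α(j)}| / (N+1) and p̃ = |{i : α̃(i) ≥ α̃(j)}| / (N+1) satisfy |p̃ − p| ≤ |{i : |α(i) − α(j)| ≤ 2δ}| / (N+1). -/
open Finset
open scoped symmDiff

theorem abs_card_sub_card_le_card_of_symmDiff_subset {ι R : Type*} [DecidableEq ι] [Ring R]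
    [LinearOrder R] [IsStrictOrderedRing R] {s t u : Finset ι} (h : s ∆ t ⊆ u) :
    |(#s : R) - #t| ≤ #u := by
  have hsd : #(s \ t) + #(t \ s) ≤ #u := by
    rw [← card_union_of_disjoint disjoint_sdiff_sdiff]
    exact card_le_card h
  have hs : #s ≤ #(s \ t) + #t := card_le_card_sdiff_add_card
  have ht : #t ≤ #(t \ s) + #s := card_le_card_sdiff_add_card
  rw [abs_sub_le_iff]
  constructor <;> rw [sub_le_iff_le_add] <;> exact_mod_cast (by omega)

theorem abs_sub_le_two_mul_of_not_le_iff_le {K : Type*} [Field K] [LinearOrder K]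
    [IsStrictOrderedRing K] {a b a' b' δ : K} (ha : |a' - a| ≤ δ) (hb : |b' - b| ≤ δ)
    (hflip : ¬ (b' ≤ a' ↔ b ≤ a)) : |a - b| ≤ 2 * δ := by
  rw [abs_le] at ha hb ⊢
  rcases le_or_gt b a with h | h <;> rcases le_or_gt b' a' with h' | h'
  · exact absurd (iff_of_true h' h) hflip
  · constructor <;> linarith
  · constructor <;> linarith
  · exact absurd (iff_of_false h'.not_ge h.not_ge) hflip

theorem acp_pvalue_close_general (N : ℕ) (δ : ℝ) (α αt : Fin (N + 1) → ℝ)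
    (h : ∀ i : Fin (N + 1), |αt i - α i| ≤ δ) :
    |((Finset.univ.filter fun i : Fin (N + 1) => αt i ≥ αt (Fin.last N)).card : ℝ) / (N + 1) -
        ((Finset.univ.filter fun i : Fin (N + 1) => α i ≥ α (Fin.last N)).card : ℝ) / (N + 1)| ≤
      ((Finset.univ.filter fun i : Fin (N + 1) => |α i - α (Fin.last N)| ≤ 2 * δ).card : ℝ) /
        (N + 1) := by
  rw [div_sub_div_same, abs_div, abs_of_pos (N.cast_add_one_pos (α := ℝ))]
  gcongr
  refine abs_card_sub_card_le_card_of_symmDiff_subset ?_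
  intro i hi
  simp only [mem_symmDiff, mem_filter, mem_univ, true_and] at hi ⊢
  exact abs_sub_le_two_mul_of_not_le_iff_le (h i) (h _) (by tauto)

/-- Quantitative closeness of conformal p-values: if the approximate scores are
uniformly within `δ` of the true scores, then the two p-values differ by at
most the fraction of indices whose true score lies within `2δ` of the test
score. -/
theorem acp_pvalue_close (N : ℕ) (δ : ℝ) (hδ : 0 ≤ δ) (α αt : Fin (N + 1) → ℝ)
    (h : ∀ i : Fin (N + 1), |αt i - α i| ≤ δ) :
    |((Finset.univ.filter fun i : Fin (N + 1) => αt i ≥ αt (Fin.last N)).card : ℝ) / (N + 1) -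
        ((Finset.univ.filter fun i : Fin (N + 1) => α i ≥ α (Fin.last N)).card : ℝ) / (N + 1)| ≤
      ((Finset.univ.filter fun i : Fin (N + 1) => |α i - α (Fin.last N)| ≤ 2 * δ).card : ℝ) /
        (N + 1) :=
  acp_pvalue_close_general N δ α αt h
end
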